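/- For every n ≥ 4, the positive semidefinite throttling number of the cycle Cₙ equals ⌈√(2n) − 1/2⌉. -/

import Mathlib

open SimpleGraph

/-- Reachability in `G` avoiding the blue set `B` (i.e., within a white component). -/
def offReach {V : Type*} (G : SimpleGraph V) (B : Set V) : V → V → Prop :=
  Relation.ReflTransGen (fun a b => G.Adj a b ∧ a ∉ B ∧ b ∉ B)

/-- The positive semidefinite color change rule: a blue vertex `v` forces a white vertex `w`
if `w` is the unique white neighbor of `v` in the white component of `w` (together with `B`). -/
def psdForces {V : Type*} (G : SimpleGraph V) (B : Set V) (v w : V) : Prop :=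
  v ∈ B ∧ w ∉ B ∧ G.Adj v w ∧
    ∀ u, u ∉ B → G.Adj v u → offReach G B u w → u = w

/-- One round of PSD forcing: perform all possible forces. -/
def psdStep {V : Type*} (G : SimpleGraph V) (B : Set V) : Set V :=
  B ∪ {w | ∃ v, psdForces G B v w}

/-- `S` is a positive semidefinite zero forcing set. -/
def IsPSDForcingSet {V : Type*} (G : SimpleGraph V) (S : Set V) : Prop :=
  ∃ t, (psdStep G)^[t] S = Set.univ

/-- The PSD propagation time of `S`. -/
noncomputable def psdPt {V : Type*} (G : SimpleGraph V) (S : Set V) : ℕ :=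
  sInf {t | (psdStep G)^[t] S = Set.univ}

/-- The PSD throttling number of `G`. -/
noncomputable def psdTh {V : Type*} (G : SimpleGraph V) [Fintype V] : ℕ :=
  sInf {k | ∃ S : Finset V, IsPSDForcingSet G ↑S ∧ k = S.card + psdPt G ↑S}

/-!
After `t` rounds a blue vertex of the cycle can only have spread to the arc of radius `t` around
it, so a PSD forcing set `S` with propagation time `t` satisfies `n ≤ |S| (2t + 1)`, which forces
`2n ≤ m (m + 1)` for `m = |S| + t`. Conversely, once two vertices are blue every white neighbor of
a blue vertex is forced (the white components are paths whose two ends see distinct blue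
vertices), so `k` blue vertices spaced `2t + 1` apart force the whole cycle in `t` rounds. Taking
`k + t = m` for the least `m` with `2n ≤ m (m + 1)` gives `th₊(Cₙ) = m = ⌈√(2n) - 1/2⌉`.
-/

open scoped Fin.CommRing

section PSDForcing

variable {V : Type*} (G : SimpleGraph V)

lemma self_subset_psdStep (B : Set V) : B ⊆ psdStep G B :=
  Set.subset_union_left

lemma self_subset_iterate_psdStep (B : Set V) (t : ℕ) : B ⊆ (psdStep G)^[t] B := by
  induction t with
  | zero => exact le_rfl
  | succ t ih =>
    rw [Function.iterate_succ_apply']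
    exact ih.trans (self_subset_psdStep G _)

lemma psdStep_subset (B : Set V) : psdStep G B ⊆ B ∪ {w | ∃ v ∈ B, G.Adj v w} := by
  rintro w (hw | ⟨v, hv, -, hadj, -⟩)
  · exact Or.inl hw
  · exact Or.inr ⟨v, hv, hadj⟩

lemma psdPt_le {S : Set V} {t : ℕ} (h : (psdStep G)^[t] S = Set.univ) : psdPt G S ≤ t :=
  Nat.sInf_le h

lemma iterate_psdPt_eq_univ {S : Set V} (h : IsPSDForcingSet G S) :
    (psdStep G)^[psdPt G S] S = Set.univ :=
  Nat.sInf_mem h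

variable [Fintype V]

lemma psdTh_le {S : Finset V} {t : ℕ} (h : (psdStep G)^[t] ↑S = Set.univ) :
    psdTh G ≤ S.card + t :=
  (show psdTh G ≤ S.card + psdPt G ↑S from Nat.sInf_le ⟨S, ⟨t, h⟩, rfl⟩).trans
    (Nat.add_le_add_left (psdPt_le G h) _)

lemma exists_psdTh_eq : ∃ S : Finset V, IsPSDForcingSet G ↑S ∧ psdTh G = S.card + psdPt G ↑S :=
  Nat.sInf_mem (⟨_, Finset.univ, ⟨0, by simp⟩, rfl⟩ :
    {k | ∃ S : Finset V, IsPSDForcingSet G ↑S ∧ k = S.card + psdPt G ↑S}.Nonempty)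

end PSDForcing

lemma two_mul_le_of_le_mul_two_mul_add_one {a k t : ℕ} (h : a ≤ k * (2 * t + 1)) :
    2 * a ≤ (k + t) * (k + t + 1) := by
  rcases le_or_gt k t with hkt | hkt
  · obtain ⟨d, rfl⟩ := Nat.exists_eq_add_of_le hkt
    nlinarith
  · obtain ⟨d, rfl⟩ := Nat.exists_eq_add_of_lt hkt
    nlinarith

lemma exists_pred_mul_lt_le_mul_succ {a : ℕ} (ha : 0 < a) :
    ∃ m, (m - 1) * m < a ∧ a ≤ m * (m + 1) := by
  have hex : ∃ m, a ≤ m * (m + 1) := ⟨a, Nat.le_mul_of_pos_right a (by omega)⟩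
  refine ⟨Nat.find hex, ?_, Nat.find_spec hex⟩
  rcases Nat.eq_zero_or_pos (Nat.find hex) with h | h
  · rw [h]; exact ha
  · have := Nat.find_min hex (Nat.sub_one_lt_of_lt h)
    rw [Nat.sub_add_cancel h] at this
    omega

lemma ceil_sqrt_sub_half_eq {a m : ℕ} (h₁ : (m - 1) * m < a) (h₂ : a ≤ m * (m + 1)) :
    ⌈Real.sqrt a - 1 / 2⌉ = m := by
  rcases m with _ | m
  · simp at h₁ h₂; omega
  rw [Nat.add_sub_cancel] at h₁
  have h₁' : (m : ℝ) * (m + 1) + 1 ≤ a := by exact_mod_cast Nat.succ_le_of_lt h₁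
  have h₂' : (a : ℝ) ≤ (m + 1) * (m + 1 + 1) := by exact_mod_cast h₂
  have hlow : (m : ℝ) + 1 / 2 < Real.sqrt a := Real.lt_sqrt_of_sq_lt (by nlinarith)
  have hupp : Real.sqrt a ≤ m + 3 / 2 := Real.sqrt_le_iff.2 ⟨by positivity, by nlinarith⟩
  rw [Int.ceil_eq_iff]
  push_cast
  constructor <;> linarith

namespace SimpleGraph

variable {n : ℕ}

lemma cycleGraph_adj_iff_eq {v w : Fin (n + 2)} :
    (cycleGraph (n + 2)).Adj v w ↔ w = v - 1 ∨ w = v + 1 := by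
  rw [← mem_neighborSet, cycleGraph_neighborSet]
  rfl

noncomputable def cycleBall (s : Fin (n + 2)) (t : ℕ) : Finset (Fin (n + 2)) :=
  (Finset.Icc (-t : ℤ) t).image fun j : ℤ => s + (j : Fin (n + 2))

lemma mem_cycleBall {s x : Fin (n + 2)} {t : ℕ} :
    x ∈ cycleBall s t ↔ ∃ j : ℤ, |j| ≤ t ∧ s + j = x := by
  simp [cycleBall, abs_le]

lemma card_cycleBall_le (s : Fin (n + 2)) (t : ℕ) : (cycleBall s t).card ≤ 2 * t + 1 :=
  Finset.card_image_le.trans (by simp; omega)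

lemma cycleBall_mono (s : Fin (n + 2)) {t t' : ℕ} (h : t ≤ t') : cycleBall s t ⊆ cycleBall s t' :=
  Finset.image_subset_image (Finset.Icc_subset_Icc (by omega) (by omega))

lemma mem_cycleBall_succ_of_adj {s x y : Fin (n + 2)} {t : ℕ} (hx : x ∈ cycleBall s t)
    (hxy : (cycleGraph (n + 2)).Adj x y) : y ∈ cycleBall s (t + 1) := by
  obtain ⟨j, hj, rfl⟩ := mem_cycleBall.1 hx
  rw [mem_cycleBall]
  rcases cycleGraph_adj_iff_eq.1 hxy with rfl | rfl
  · exact ⟨j - 1, by rw [abs_le] at hj ⊢; push_cast; omega, by push_cast; ring⟩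
  · exact ⟨j + 1, by rw [abs_le] at hj ⊢; push_cast; omega, by push_cast; ring⟩

lemma mem_cycleBall_succ {s x : Fin (n + 2)} {t : ℕ} (hx : x ∈ cycleBall s (t + 1)) :
    x ∈ cycleBall s t ∨ ∃ y ∈ cycleBall s t, (cycleGraph (n + 2)).Adj y x := by
  obtain ⟨j, hj, rfl⟩ := mem_cycleBall.1 hx
  by_cases hjt : |j| ≤ t
  · exact Or.inl (mem_cycleBall.2 ⟨j, hjt, rfl⟩)
  right
  rcases abs_le.1 hj with ⟨hj₁, hj₂⟩
  rcases le_or_gt 0 j with h | h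
  · obtain rfl : j = t + 1 := by rw [abs_of_nonneg h] at hjt; push_cast at hj₂; omega
    refine ⟨s + (t : ℤ), mem_cycleBall.2 ⟨t, by simp, rfl⟩, cycleGraph_adj_iff_eq.2 (Or.inr ?_)⟩
    push_cast; ring
  · obtain rfl : j = -(t + 1) := by rw [abs_of_neg h] at hjt; push_cast at hj₁; omega
    refine ⟨s + (-t : ℤ), mem_cycleBall.2 ⟨-t, by simp, rfl⟩, cycleGraph_adj_iff_eq.2 (Or.inl ?_)⟩
    push_cast; ring

lemma val_sub_lt_iff_of_adj {v b c d : Fin (n + 2)} (hadj : (cycleGraph (n + 2)).Adj c d)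
    (hcv : c ≠ v) (hdv : d ≠ v) (hcb : c ≠ b) (hdb : d ≠ b) :
    (c - v).val < (b - v).val ↔ (d - v).val < (b - v).val := by
  wlog hcd : d = c + 1 generalizing c d
  · have hdc : c = d + 1 := by
      rcases cycleGraph_adj_iff_eq.1 hadj with rfl | rfl
      · ring
      · exact absurd rfl hcd
    exact (this hadj.symm hdv hcv hdb hcb hdc).symm
  subst hcd
  have hlast : c - v ≠ Fin.last (n + 1) := by
    intro h
    apply hdv
    rw [← sub_eq_zero, add_sub_right_comm, h]
    exact Fin.last_add_one (n + 1)
  have hval : (c + 1 - v).val = (c - v).val + 1 := by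
    rw [add_sub_right_comm, Fin.val_add_one, if_neg hlast]
  have hne : (c + 1 - v).val ≠ (b - v).val :=
    fun h => hdb (sub_left_injective (Fin.val_injective h))
  omega

/-- On a cycle, the white vertices lying strictly between two blue vertices `v` and `b` (going
in the positive direction from `v`) form a union of white components. -/
lemma val_sub_lt_iff_of_offReach {B : Set (Fin (n + 2))} {v b x y : Fin (n + 2)} (hv : v ∈ B)
    (hb : b ∈ B) (h : offReach (cycleGraph (n + 2)) B x y) :
    (x - v).val < (b - v).val ↔ (y - v).val < (b - v).val := by
  induction h with
  | refl => rfl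
  | tail _ hcd ih =>
    obtain ⟨hadj, hc, hd⟩ := hcd
    exact ih.trans (val_sub_lt_iff_of_adj hadj (ne_of_mem_of_not_mem hv hc).symm
      (ne_of_mem_of_not_mem hv hd).symm (ne_of_mem_of_not_mem hb hc).symm
      (ne_of_mem_of_not_mem hb hd).symm)

/-- The two neighbors of `v` lie on different sides of the second blue vertex `b`, so they are
not in the same white component. -/
lemma mem_psdStep_cycleGraph {B : Set (Fin (n + 2))} {v b w : Fin (n + 2)} (hv : v ∈ B)
    (hb : b ∈ B) (hbv : b ≠ v) (hvw : (cycleGraph (n + 2)).Adj v w) :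
    w ∈ psdStep (cycleGraph (n + 2)) B := by
  by_cases hw : w ∈ B
  · exact Or.inl hw
  refine Or.inr ⟨v, hv, hw, hvw, fun u hu hvu hreach => ?_⟩
  by_contra huw
  have hside := val_sub_lt_iff_of_offReach hv hb hreach
  have hbv' : (b - v).val ≠ 0 := fun h => hbv (sub_eq_zero.1 (Fin.val_injective h))
  have hbu : (b - v).val ≠ (u - v).val := fun h => ne_of_mem_of_not_mem hb hu
    (sub_left_injective (Fin.val_injective h))
  have hbw : (b - v).val ≠ (w - v).val := fun h => ne_of_mem_of_not_mem hb hw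
    (sub_left_injective (Fin.val_injective h))
  have hblt := (b - v).isLt
  rcases cycleGraph_adj_iff_eq.1 hvu with rfl | rfl <;>
  rcases cycleGraph_adj_iff_eq.1 hvw with rfl | rfl <;>
  simp at huw hside hbu hbw <;> omega

lemma iterate_psdStep_cycleGraph_subset (S : Finset (Fin (n + 2))) (t : ℕ) :
    (psdStep (cycleGraph (n + 2)))^[t] ↑S ⊆ {x | ∃ s ∈ S, x ∈ cycleBall s t} := by
  induction t with
  | zero => exact fun x hx => ⟨x, hx, mem_cycleBall.2 ⟨0, by simp, by simp⟩⟩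
  | succ t ih =>
    rw [Function.iterate_succ_apply']
    intro x hx
    rcases psdStep_subset _ _ hx with hx | ⟨v, hv, hvx⟩
    · obtain ⟨s, hs, hx⟩ := ih hx
      exact ⟨s, hs, cycleBall_mono s t.le_succ hx⟩
    · obtain ⟨s, hs, hv⟩ := ih hv
      exact ⟨s, hs, mem_cycleBall_succ_of_adj hv hvx⟩

lemma le_card_mul_of_iterate_psdStep_eq_univ {S : Finset (Fin (n + 2))} {t : ℕ}
    (h : (psdStep (cycleGraph (n + 2)))^[t] ↑S = Set.univ) : n + 2 ≤ S.card * (2 * t + 1) := by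
  have huniv : (Finset.univ : Finset (Fin (n + 2))) ⊆ S.biUnion fun s => cycleBall s t := by
    intro x _
    obtain ⟨s, hs, hx⟩ := iterate_psdStep_cycleGraph_subset S t (h ▸ Set.mem_univ x)
    exact Finset.mem_biUnion.2 ⟨s, hs, hx⟩
  calc n + 2 = (Finset.univ : Finset (Fin (n + 2))).card := by simp
    _ ≤ (S.biUnion fun s => cycleBall s t).card := Finset.card_le_card huniv
    _ ≤ S.card * (2 * t + 1) :=
      Finset.card_biUnion_le_card_mul _ _ _ fun s _ => card_cycleBall_le s t

lemma cycleBall_subset_iterate_psdStep {S : Finset (Fin (n + 2))} {s₀ s₁ : Fin (n + 2)}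
    (h₀ : s₀ ∈ S) (h₁ : s₁ ∈ S) (hne : s₀ ≠ s₁) {s : Fin (n + 2)} (hs : s ∈ S) (t : ℕ) :
    ↑(cycleBall s t) ⊆ (psdStep (cycleGraph (n + 2)))^[t] ↑S := by
  induction t with
  | zero =>
    intro x hx
    obtain ⟨j, hj, rfl⟩ := mem_cycleBall.1 hx
    obtain rfl : j = 0 := abs_nonpos_iff.1 (by exact_mod_cast hj)
    simpa using hs
  | succ t ih =>
    intro x hx
    rw [Function.iterate_succ_apply']
    rcases mem_cycleBall_succ hx with hx | ⟨y, hy, hyx⟩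
    · exact self_subset_psdStep _ _ (ih hx)
    · have hSB := self_subset_iterate_psdStep (cycleGraph (n + 2)) (↑S) t
      obtain ⟨b, hb, hby⟩ : ∃ b ∈ S, b ≠ y := by
        by_cases h : s₀ = y
        · exact ⟨s₁, h₁, fun h' => hne (h.trans h'.symm)⟩
        · exact ⟨s₀, h₀, h⟩
      exact mem_psdStep_cycleGraph (ih hy) (hSB hb) hby hyx

/-- Blue vertices at `t, 3 t + 1, 5 t + 2, …` cover the cycle by their balls of radius `t`. -/
lemma exists_mem_cycleBall {k t : ℕ} (hk : n + 2 ≤ k * (2 * t + 1)) (x : Fin (n + 2)) :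
    ∃ j < k, x ∈ cycleBall ((j * (2 * t + 1) + t : ℕ) : Fin (n + 2)) t := by
  have hq : x.val / (2 * t + 1) < k := by
    rw [Nat.div_lt_iff_lt_mul (by omega)]
    exact x.isLt.trans_le hk
  have hr := Nat.mod_lt x.val (show 0 < 2 * t + 1 by omega)
  have hx := Nat.div_add_mod' x.val (2 * t + 1)
  generalize x.val / (2 * t + 1) = q, x.val % (2 * t + 1) = r at hq hr hx
  refine ⟨q, hq, mem_cycleBall.2 ⟨r - t, by rw [abs_le]; constructor <;> omega, ?_⟩⟩
  rw [← Fin.cast_val_eq_self x, ← hx]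
  push_cast
  ring

lemma two_mul_le_psdTh_cycleGraph :
    2 * (n + 2) ≤ psdTh (cycleGraph (n + 2)) * (psdTh (cycleGraph (n + 2)) + 1) := by
  obtain ⟨S, hS, hth⟩ := exists_psdTh_eq (cycleGraph (n + 2))
  rw [hth]
  exact two_mul_le_of_le_mul_two_mul_add_one
    (le_card_mul_of_iterate_psdStep_eq_univ (iterate_psdPt_eq_univ _ hS))

lemma psdTh_cycleGraph_le {k t : ℕ} (hk : 2 ≤ k) (ht : 2 * t + 1 < n + 2)
    (hcov : n + 2 ≤ k * (2 * t + 1)) : psdTh (cycleGraph (n + 2)) ≤ k + t := by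
  set S : Finset (Fin (n + 2)) :=
    (Finset.range k).image fun j => ((j * (2 * t + 1) + t : ℕ) : Fin (n + 2))
  have hmem : ∀ j < k, ((j * (2 * t + 1) + t : ℕ) : Fin (n + 2)) ∈ S :=
    fun j hj => Finset.mem_image_of_mem _ (Finset.mem_range.2 hj)
  have hne : ((0 * (2 * t + 1) + t : ℕ) : Fin (n + 2)) ≠
      ((1 * (2 * t + 1) + t : ℕ) : Fin (n + 2)) := by
    intro h
    have hdvd : ((2 * t + 1 : ℕ) : Fin (n + 2)) = 0 := by
      rw [← sub_eq_zero.2 h.symm]; push_cast; ring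
    rw [Fin.natCast_eq_zero] at hdvd
    exact absurd (Nat.le_of_dvd (by omega) hdvd) (by omega)
  have hforce : (psdStep (cycleGraph (n + 2)))^[t] ↑S = Set.univ := by
    refine Set.eq_univ_of_forall fun x => ?_
    obtain ⟨j, hj, hx⟩ := exists_mem_cycleBall hcov x
    exact cycleBall_subset_iterate_psdStep (hmem 0 (by omega)) (hmem 1 (by omega)) hne
      (hmem j hj) t hx
  have hcard : S.card ≤ k := Finset.card_image_le.trans (Finset.card_range k).le
  exact (psdTh_le _ hforce).trans (by omega)

lemma psdTh_cycleGraph_le_of_two_mul_le {m : ℕ} (hm : 3 ≤ m) (h₁ : (m - 1) * m < 2 * (n + 2))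
    (h₂ : 2 * (n + 2) ≤ m * (m + 1)) : psdTh (cycleGraph (n + 2)) ≤ m := by
  obtain ⟨t, rfl | rfl⟩ : ∃ t, m = 2 * (t + 1) ∨ m = 2 * t + 1 := ⟨(m - 1) / 2, by omega⟩
  · rw [show 2 * (t + 1) - 1 = 2 * t + 1 by omega] at h₁
    have := psdTh_cycleGraph_le (n := n) (k := t + 1) (t := t + 1) (by omega)
      (by nlinarith [show 1 ≤ t by omega]) (by nlinarith)
    omega
  · rw [Nat.add_sub_cancel] at h₁
    have := psdTh_cycleGraph_le (n := n) (k := t + 1) (t := t) (by omega) (by nlinarith)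
      (by nlinarith)
    omega

end SimpleGraph

theorem stmt_10 (n : ℕ) (hn : 4 ≤ n) :
    (psdTh (SimpleGraph.cycleGraph n) : ℤ) = ⌈Real.sqrt (2 * n) - 1 / 2⌉ := by
  obtain ⟨n, rfl⟩ : ∃ k, n = k + 2 := ⟨n - 2, by omega⟩
  obtain ⟨m, hm₁, hm₂⟩ := exists_pred_mul_lt_le_mul_succ (a := 2 * (n + 2)) (by omega)
  have hm : 3 ≤ m := by nlinarith
  have hth : psdTh (cycleGraph (n + 2)) = m := by
    refine le_antisymm (psdTh_cycleGraph_le_of_two_mul_le hm hm₁ hm₂) ?_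
    by_contra! h
    have hlow := two_mul_le_psdTh_cycleGraph (n := n)
    have : psdTh (cycleGraph (n + 2)) * (psdTh (cycleGraph (n + 2)) + 1) ≤ (m - 1) * m :=
      Nat.mul_le_mul (by omega) (by omega)
    omega
  rw [hth]
  exact_mod_cast (ceil_sqrt_sub_half_eq hm₁ hm₂).symm
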